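/- arXiv:2307.11288 — 5 statements merged into one kernel-verified Lean document; each statement's English description precedes it below -/
import Mathlib

section
/- Let X and A be nonempty finite sets, T ≥ 1, and let r, f_r : X × A → ℝ and L₁ ≥ 0 satisfy max_{a∈A} r(x,a) − r(x,a) ≤ L₁·(max_{a'∈A} f_r(x,a') − f_r(x,a)) for all x ∈ X and a ∈ A. For each t ∈ {1,…,T} let f̄_t, f̲_t : X × A → ℝ satisfy f̲_t(x,a) ≤ f_r(x,a) ≤ f̄_t(x,a) for all (x,a). Suppose x_t ∈ argmax_{x∈X} (max_{a∈A} f̄_t(x,a) − max_{a∈A} f̲_t(x,a)), a_t ∈ argmax_{a∈A} f̄_t(x_t,a), and π̂ : X → A satisfies π̂(x) ∈ argmax_{a∈A} max_{t≤T} f̲_t(x,a) for every x. Then max_{x∈X} (max_{a∈A} r(x,a) − r(x, π̂(x))) ≤ (L₁/T) · Σ_{t=1}^{T} (f̄_t(x_t,a_t) − f̲_t(x_t,a_t)). -/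
open Finset

/-- Deterministic core of Theorem 1 (regret bound for Borda-AE), conditioned on all
confidence bands containing the contextual Borda function. -/
theorem borda_ae_core_regret
    {X A : Type*} [Fintype X] [Fintype A] [Nonempty X] [Nonempty A]
    (T : ℕ) (hT : 1 ≤ T)
    (r fr : X → A → ℝ) (L1 : ℝ) (hL1 : 0 ≤ L1)
    (hlip : ∀ x a,
      (univ.sup' univ_nonempty fun a' => r x a') - r x a ≤
        L1 * ((univ.sup' univ_nonempty fun a' => fr x a') - fr x a))
    (ub lb : ℕ → X → A → ℝ)
    (hband : ∀ t ∈ Icc 1 T, ∀ x a, lb t x a ≤ fr x a ∧ fr x a ≤ ub t x a)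
    (xs : ℕ → X) (as : ℕ → A)
    (hx : ∀ t ∈ Icc 1 T, ∀ x,
      (univ.sup' univ_nonempty fun a => ub t x a) -
        (univ.sup' univ_nonempty fun a => lb t x a) ≤
      (univ.sup' univ_nonempty fun a => ub t (xs t) a) -
        (univ.sup' univ_nonempty fun a => lb t (xs t) a))
    (ha : ∀ t ∈ Icc 1 T, ∀ a, ub t (xs t) a ≤ ub t (xs t) (as t))
    (π : X → A)
    (hπ : ∀ x a,
      ((Icc 1 T).sup' (Finset.nonempty_Icc.mpr hT) fun t => lb t x a) ≤
      ((Icc 1 T).sup' (Finset.nonempty_Icc.mpr hT) fun t => lb t x (π x))) :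
    (univ.sup' univ_nonempty fun x =>
      (univ.sup' univ_nonempty fun a => r x a) - r x (π x)) ≤
    (L1 / T) * ∑ t ∈ Icc 1 T, (ub t (xs t) (as t) - lb t (xs t) (as t)) := by
  have hT' : (0:ℝ) < T := by exact_mod_cast Nat.lt_of_lt_of_le Nat.zero_lt_one hT
  apply Finset.sup'_le
  intro x _
  set g : ℝ := (univ.sup' univ_nonempty fun a => fr x a) - fr x (π x) with hg
  have hgap : ∀ t ∈ Icc 1 T, g ≤ ub t (xs t) (as t) - lb t (xs t) (as t) := by
    intro t ht
    have h1 : (univ.sup' univ_nonempty fun a => fr x a) ≤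
        univ.sup' univ_nonempty fun a => ub t x a := by
      apply Finset.sup'_le
      intro a _
      exact le_trans (hband t ht x a).2 (Finset.le_sup' _ (mem_univ a))
    have h2 : (univ.sup' univ_nonempty fun a => lb t x a) ≤ fr x (π x) := by
      apply Finset.sup'_le
      intro a _
      calc lb t x a ≤ (Icc 1 T).sup' (Finset.nonempty_Icc.mpr hT) fun s => lb s x a :=
            Finset.le_sup' (fun s => lb s x a) ht
        _ ≤ (Icc 1 T).sup' (Finset.nonempty_Icc.mpr hT) fun s => lb s x (π x) := hπ x a
        _ ≤ fr x (π x) := Finset.sup'_le _ _ fun s hs => (hband s hs x (π x)).1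
    have h3 := hx t ht x
    have h4 : (univ.sup' univ_nonempty fun a => ub t (xs t) a) ≤ ub t (xs t) (as t) :=
      Finset.sup'_le _ _ fun a _ => ha t ht a
    have h5 : lb t (xs t) (as t) ≤ univ.sup' univ_nonempty fun a => lb t (xs t) a :=
      Finset.le_sup' _ (mem_univ _)
    simp only [hg]
    linarith
  have hsum : (T : ℝ) * g ≤ ∑ t ∈ Icc 1 T, (ub t (xs t) (as t) - lb t (xs t) (as t)) := by
    have : (T : ℝ) * g = ∑ _t ∈ Icc 1 T, g := by
      rw [Finset.sum_const, Nat.card_Icc, nsmul_eq_mul]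
      norm_num
    rw [this]
    exact Finset.sum_le_sum hgap
  have hg' : g ≤ (∑ t ∈ Icc 1 T, (ub t (xs t) (as t) - lb t (xs t) (as t))) / T :=
    (le_div_iff₀' hT').mpr hsum
  calc (univ.sup' univ_nonempty fun a => r x a) - r x (π x) ≤ L1 * g := hlip x (π x)
    _ ≤ L1 * ((∑ t ∈ Icc 1 T, (ub t (xs t) (as t) - lb t (xs t) (as t))) / T) :=
        mul_le_mul_of_nonneg_left hg' hL1
    _ = (L1 / T) * ∑ t ∈ Icc 1 T, (ub t (xs t) (as t) - lb t (xs t) (as t)) := by ring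
end

section
/- Let X and A be nonempty finite sets, T ≥ 1, and let r, f_r : X × A → ℝ and L₁ ≥ 0 satisfy max_{a∈A} r(x,a) − r(x,a) ≤ L₁·(max_{a'∈A} f_r(x,a') − f_r(x,a)) for all x ∈ X and a ∈ A. For each t ∈ {1,…,T} let μ_t, σ_t : X × A → ℝ with σ_t ≥ 0, let β : {1,…,T} → ℝ be nonnegative and nondecreasing, and set f̄_t = μ_t + β_t σ_t, f̲_t = μ_t − β_t σ_t. Assume f̲_t(x,a) ≤ f_r(x,a) ≤ f̄_t(x,a) for all t, x, a. Suppose x_t ∈ argmax_{x∈X} (max_{a∈A} f̄_t(x,a) − max_{a∈A} f̲_t(x,a)), a_t ∈ argmax_{a∈A} f̄_t(x_t,a), π̂(x) ∈ argmax_{a∈A} max_{t≤T} f̲_t(x,a), and that Σ_{t=1}^{T} σ_t(x_t,a_t)² ≤ C for some C ≥ 0. Then max_{x∈X} (max_{a∈A} r(x,a) − r(x, π̂(x))) ≤ 2 L₁ β_T √(C / T). -/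
open Finset

/-- Full quantitative deterministic form of Theorem 1 for Borda-AE. -/
theorem borda_ae_quantitative_regret
    {X A : Type*} [Fintype X] [Fintype A] [Nonempty X] [Nonempty A]
    (T : ℕ) (hT : 1 ≤ T)
    (r fr : X → A → ℝ) (L1 : ℝ) (hL1 : 0 ≤ L1)
    (hlip : ∀ x a,
      (univ.sup' univ_nonempty fun a' => r x a') - r x a ≤
        L1 * ((univ.sup' univ_nonempty fun a' => fr x a') - fr x a))
    (μ σ : ℕ → X → A → ℝ)
    (hσ : ∀ t ∈ Icc 1 T, ∀ x a, 0 ≤ σ t x a)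
    (β : ℕ → ℝ)
    (hβ0 : ∀ t ∈ Icc 1 T, 0 ≤ β t)
    (hβmono : ∀ s ∈ Icc 1 T, ∀ t ∈ Icc 1 T, s ≤ t → β s ≤ β t)
    (ub lb : ℕ → X → A → ℝ)
    (hub : ∀ t ∈ Icc 1 T, ∀ x a, ub t x a = μ t x a + β t * σ t x a)
    (hlb : ∀ t ∈ Icc 1 T, ∀ x a, lb t x a = μ t x a - β t * σ t x a)
    (hband : ∀ t ∈ Icc 1 T, ∀ x a, lb t x a ≤ fr x a ∧ fr x a ≤ ub t x a)
    (xs : ℕ → X) (as : ℕ → A)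
    (hx : ∀ t ∈ Icc 1 T, ∀ x,
      (univ.sup' univ_nonempty fun a => ub t x a) -
        (univ.sup' univ_nonempty fun a => lb t x a) ≤
      (univ.sup' univ_nonempty fun a => ub t (xs t) a) -
        (univ.sup' univ_nonempty fun a => lb t (xs t) a))
    (ha : ∀ t ∈ Icc 1 T, ∀ a, ub t (xs t) a ≤ ub t (xs t) (as t))
    (π : X → A)
    (hπ : ∀ x a,
      ((Icc 1 T).sup' (Finset.nonempty_Icc.mpr hT) fun t => lb t x a) ≤
      ((Icc 1 T).sup' (Finset.nonempty_Icc.mpr hT) fun t => lb t x (π x)))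
    (C : ℝ) (hC : 0 ≤ C)
    (hsum : ∑ t ∈ Icc 1 T, (σ t (xs t) (as t)) ^ 2 ≤ C) :
    (univ.sup' univ_nonempty fun x =>
      (univ.sup' univ_nonempty fun a => r x a) - r x (π x)) ≤
    2 * L1 * β T * Real.sqrt (C / T) := by

  have hTmem : T ∈ Icc 1 T := by simp [hT]
  have hTpos : (0:ℝ) < T := by exact_mod_cast hT
  obtain ⟨t, ht, htle⟩ : ∃ t ∈ Icc 1 T, σ t (xs t) (as t) ^ 2 ≤ C / T := by
    by_contra h
    push_neg at h
    have hlt : ∑ t ∈ Icc 1 T, (C / T) < ∑ t ∈ Icc 1 T, σ t (xs t) (as t) ^ 2 :=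
      Finset.sum_lt_sum_of_nonempty (Finset.nonempty_Icc.mpr hT) (fun i hi => h i hi)
    rw [Finset.sum_const, Nat.card_Icc, Nat.add_sub_cancel, nsmul_eq_mul,
      mul_div_cancel₀ _ (ne_of_gt hTpos)] at hlt
    exact absurd hsum (not_le.mpr hlt)
  have htT := (Finset.mem_Icc.mp ht).2
  have hσt := hσ t ht (xs t) (as t)
  have hσle : σ t (xs t) (as t) ≤ Real.sqrt (C / T) := by
    calc σ t (xs t) (as t) = Real.sqrt (σ t (xs t) (as t) ^ 2) := (Real.sqrt_sq hσt).symm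
      _ ≤ Real.sqrt (C / T) := Real.sqrt_le_sqrt htle
  have key : ∀ x, (univ.sup' univ_nonempty fun a => fr x a) - fr x (π x) ≤
      2 * β T * Real.sqrt (C / T) := by
    intro x
    have h1 : (univ.sup' univ_nonempty fun a => fr x a) ≤
        (univ.sup' univ_nonempty fun a => ub t x a) :=
      Finset.sup'_le _ _ fun a _ =>
        le_trans (hband t ht x a).2 (Finset.le_sup' _ (mem_univ a))
    have h2 : (univ.sup' univ_nonempty fun a => lb t x a) ≤ fr x (π x) := by
      apply Finset.sup'_le
      intro a _
      calc lb t x a ≤ (Icc 1 T).sup' (Finset.nonempty_Icc.mpr hT) fun s => lb s x a :=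
            Finset.le_sup' (fun s => lb s x a) ht
        _ ≤ (Icc 1 T).sup' (Finset.nonempty_Icc.mpr hT) fun s => lb s x (π x) := hπ x a
        _ ≤ fr x (π x) := Finset.sup'_le _ _ fun s hs => (hband s hs x (π x)).1
    have h3 : (univ.sup' univ_nonempty fun a => ub t (xs t) a) ≤ ub t (xs t) (as t) :=
      Finset.sup'_le _ _ fun a _ => ha t ht a
    have h4 : lb t (xs t) (as t) ≤ (univ.sup' univ_nonempty fun a => lb t (xs t) a) :=
      Finset.le_sup' _ (mem_univ (as t))
    calc (univ.sup' univ_nonempty fun a => fr x a) - fr x (π x)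
        ≤ (univ.sup' univ_nonempty fun a => ub t x a) -
          (univ.sup' univ_nonempty fun a => lb t x a) := sub_le_sub h1 h2
      _ ≤ (univ.sup' univ_nonempty fun a => ub t (xs t) a) -
          (univ.sup' univ_nonempty fun a => lb t (xs t) a) := hx t ht x
      _ ≤ ub t (xs t) (as t) - lb t (xs t) (as t) := sub_le_sub h3 h4
      _ = 2 * β t * σ t (xs t) (as t) := by
          rw [hub t ht, hlb t ht]; ring
      _ ≤ 2 * β T * σ t (xs t) (as t) := by
          have := hβmono t ht T hTmem htT
          nlinarith
      _ ≤ 2 * β T * Real.sqrt (C / T) := by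
          have hβT := hβ0 T hTmem
          nlinarith [Real.sqrt_nonneg (C / T)]
  apply Finset.sup'_le
  intro x _
  calc (univ.sup' univ_nonempty fun a => r x a) - r x (π x)
      ≤ L1 * ((univ.sup' univ_nonempty fun a' => fr x a') - fr x (π x)) := hlip x (π x)
    _ ≤ L1 * (2 * β T * Real.sqrt (C / T)) := mul_le_mul_of_nonneg_left (key x) hL1
    _ = 2 * L1 * β T * Real.sqrt (C / T) := by ring
end

section
/- Let X and A be nonempty finite sets, let r, f_r : X × A → ℝ and L₁ ≥ 0 satisfy max_{a∈A} r(x,a) − r(x,a) ≤ L₁·(max_{a'∈A} f_r(x,a') − f_r(x,a)) for all x ∈ X and a ∈ A, let T ≥ 1, and for each t ∈ {1,…,T} let f̄_t, f̲_t : X × A → ℝ satisfy f̲_t(x,a) ≤ f_r(x,a) ≤ f̄_t(x,a) for all (x,a). If π̂ : X → A satisfies π̂(x) ∈ argmax_{a∈A} max_{t≤T} f̲_t(x,a) for every x, then for every x ∈ X: max_{a∈A} r(x,a) − r(x, π̂(x)) ≤ L₁ · min_{t≤T} (max_{a∈A} f̄_t(x,a) − max_{a∈A} f̲_t(x,a)).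 -/
open Finset

/-- Intermediate claim in the proof of Theorem 1: combining Assumption 2 with the validity
of the confidence bands and the definition of the pessimistic policy. -/
theorem pessimistic_policy_reward_gap_bound
    {X A : Type*} [Fintype X] [Fintype A] [Nonempty X] [Nonempty A]
    (r fr : X → A → ℝ) (L1 : ℝ) (hL1 : 0 ≤ L1)
    (hlip : ∀ x a,
      (univ.sup' univ_nonempty fun a' => r x a') - r x a ≤
        L1 * ((univ.sup' univ_nonempty fun a' => fr x a') - fr x a))
    (T : ℕ) (hT : 1 ≤ T)
    (ub lb : ℕ → X → A → ℝ)
    (hband : ∀ t ∈ Icc 1 T, ∀ x a, lb t x a ≤ fr x a ∧ fr x a ≤ ub t x a)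
    (π : X → A)
    (hπ : ∀ x a,
      ((Icc 1 T).sup' (Finset.nonempty_Icc.mpr hT) fun t => lb t x a) ≤
      ((Icc 1 T).sup' (Finset.nonempty_Icc.mpr hT) fun t => lb t x (π x))) :
    ∀ x, (univ.sup' univ_nonempty fun a => r x a) - r x (π x) ≤
      L1 * (Icc 1 T).inf' (Finset.nonempty_Icc.mpr hT) (fun t =>
        (univ.sup' univ_nonempty fun a => ub t x a) -
          (univ.sup' univ_nonempty fun a => lb t x a)) := by
  intro x
  refine (hlip x (π x)).trans (mul_le_mul_of_nonneg_left ?_ hL1)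
  rw [le_inf'_iff]
  intro t ht
  have h1 : (univ.sup' univ_nonempty fun a => fr x a) ≤
      univ.sup' univ_nonempty fun a => ub t x a := by
    apply sup'_le
    intro a _
    exact le_sup'_of_le _ (mem_univ a) (hband t ht x a).2
  have h2 : (univ.sup' univ_nonempty fun a => lb t x a) ≤ fr x (π x) := by
    apply sup'_le
    intro a _
    calc lb t x a ≤ (Icc 1 T).sup' (Finset.nonempty_Icc.mpr hT) fun s => lb s x a :=
          le_sup' (fun s => lb s x a) ht
      _ ≤ (Icc 1 T).sup' (Finset.nonempty_Icc.mpr hT) fun s => lb s x (π x) := hπ x a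
      _ ≤ fr x (π x) := by
          apply sup'_le
          intro s hs
          exact (hband s hs x (π x)).1
  linarith
end

section
/- Let A be a nonempty finite set, L₁ > 0, and let σ : ℝ → ℝ satisfy σ(u) − σ(v) ≥ (1/L₁)(u − v) for all u ≥ v. Let g : A → ℝ and define f(a) = (1/|A|) · Σ_{a'∈A} σ(g(a) − g(a')). Then for every a ∈ A: (1/L₁)·(max_{a'∈A} g(a') − g(a)) ≤ max_{a'∈A} f(a') − f(a). -/
open Finset

/-- A slope condition on the link function suffices for Assumption 2 of the paper:
the reward suboptimality is at most `L₁` times the Borda suboptimality. -/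
theorem link_slope_implies_borda_assumption
    {A : Type*} [Fintype A] [Nonempty A]
    (L1 : ℝ) (hL1 : 0 < L1)
    (σ : ℝ → ℝ) (hσ : ∀ u v : ℝ, v ≤ u → (1 / L1) * (u - v) ≤ σ u - σ v)
    (g : A → ℝ) (f : A → ℝ)
    (hf : ∀ a, f a = (1 / (Fintype.card A : ℝ)) * ∑ a' : A, σ (g a - g a')) :
    ∀ a, (1 / L1) * ((univ.sup' univ_nonempty fun a' => g a') - g a) ≤
      (univ.sup' univ_nonempty fun a' => f a') - f a := by
  intro a
  obtain ⟨b, hb, hbmax⟩ := exists_mem_eq_sup' univ_nonempty g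
  have hga : g a ≤ g b := by
    have := le_sup' g (mem_univ a)
    rw [← hbmax]; exact this
  have hcard : (0 : ℝ) < (Fintype.card A : ℝ) := by
    exact_mod_cast Fintype.card_pos
  have key : (1 / L1) * (g b - g a) ≤ f b - f a := by
    rw [hf b, hf a, ← mul_sub, ← Finset.sum_sub_distrib]
    have hsum : ∀ a' ∈ (univ : Finset A),
        (1 / L1) * (g b - g a) ≤ σ (g b - g a') - σ (g a - g a') := by
      intro a' _
      have := hσ (g b - g a') (g a - g a') (by linarith)
      calc (1 / L1) * (g b - g a) = (1 / L1) * ((g b - g a') - (g a - g a')) := by ring_nf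
        _ ≤ _ := this
    have := Finset.sum_le_sum hsum
    rw [Finset.sum_const, Finset.card_univ, nsmul_eq_mul] at this
    calc (1 / L1) * (g b - g a)
        = (1 / (Fintype.card A : ℝ)) * ((Fintype.card A : ℝ) * ((1 / L1) * (g b - g a))) := by
          field_simp
      _ ≤ _ := by
          apply mul_le_mul_of_nonneg_left this (by positivity)
  have hfb : f b ≤ univ.sup' univ_nonempty fun a' => f a' := le_sup' f (mem_univ b)
  rw [hbmax]
  linarith
end

section
/- Let X and A be nonempty finite sets, T ≥ 1, and let g : {1,…,T} × X → ℝ be defined by g(t,x) = max_{a∈A} f̄_t(x,a) − max_{a∈A} f̲_t(x,a) for functions f̄_t, f̲_t : X × A → ℝ with f̲_t ≤ f̄_t pointwise. Suppose for each t, x_t ∈ argmax_{x∈X} g(t,x) and a_t ∈ argmax_{a∈A} f̄_t(x_t,a). Then for every x ∈ X: min_{t≤T} g(t,x) ≤ (1/T) · Σ_{t=1}^{T} (f̄_t(x_t,a_t) − f̲_t(x_t,a_t)). -/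
open Finset

/-- Composite step in the proof of Theorem 1: the context-selection rule, the
action-selection rule, and the bound of a minimum by an average together control the
value-function gap at every context by the average selected confidence width. -/
theorem min_gap_le_average_width
    {X A : Type*} [Fintype X] [Fintype A] [Nonempty X] [Nonempty A]
    (T : ℕ) (hT : 1 ≤ T)
    (ub lb : ℕ → X → A → ℝ)
    (hle : ∀ t ∈ Icc 1 T, ∀ x a, lb t x a ≤ ub t x a)
    (g : ℕ → X → ℝ)
    (hg : ∀ t ∈ Icc 1 T, ∀ x, g t x =
      (univ.sup' univ_nonempty fun a => ub t x a) -
        (univ.sup' univ_nonempty fun a => lb t x a))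
    (xs : ℕ → X) (as : ℕ → A)
    (hx : ∀ t ∈ Icc 1 T, ∀ x, g t x ≤ g t (xs t))
    (ha : ∀ t ∈ Icc 1 T, ∀ a, ub t (xs t) a ≤ ub t (xs t) (as t)) :
    ∀ x, (Icc 1 T).inf' (Finset.nonempty_Icc.mpr hT) (fun t => g t x) ≤
      (1 / (T : ℝ)) * ∑ t ∈ Icc 1 T, (ub t (xs t) (as t) - lb t (xs t) (as t)) := by
  intro x
  set ne : (Icc 1 T).Nonempty := Finset.nonempty_Icc.mpr hT
  set m := (Icc 1 T).inf' ne (fun t => g t x) with hm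
  have key : ∀ t ∈ Icc 1 T, m ≤ ub t (xs t) (as t) - lb t (xs t) (as t) := by
    intro t ht
    have h1 : m ≤ g t x := Finset.inf'_le _ ht
    have h2 : g t x ≤ g t (xs t) := hx t ht x
    have h3 : g t (xs t) ≤ ub t (xs t) (as t) - lb t (xs t) (as t) := by
      rw [hg t ht]
      have hsupub : (univ.sup' univ_nonempty fun a => ub t (xs t) a) ≤ ub t (xs t) (as t) :=
        Finset.sup'_le _ _ fun a _ => ha t ht a
      have hsuplb : lb t (xs t) (as t) ≤ univ.sup' univ_nonempty fun a => lb t (xs t) a :=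
        Finset.le_sup' _ (mem_univ _)
      linarith
    linarith
  have hsum : (T : ℝ) * m ≤ ∑ t ∈ Icc 1 T, (ub t (xs t) (as t) - lb t (xs t) (as t)) := by
    calc (T : ℝ) * m = ∑ _t ∈ Icc 1 T, m := by
          rw [Finset.sum_const, Nat.card_Icc]
          simp [nsmul_eq_mul]
      _ ≤ _ := Finset.sum_le_sum key
  have hTpos : (0 : ℝ) < T := by exact_mod_cast hT
  rw [div_mul_eq_mul_div, one_mul, le_div_iff₀ hTpos]
  linarith
end
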